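/- For q ∈ [0,1], the quantity A(q) = 1/2 + (1/4)√((1−q)(1 + q/√(1+q²))) is monotonically strictly decreasing in q, with A(0) = 3/4 and A(1) = 1/2. -/

import Mathlib

/-- The optimal one-sided CHSH value A(q) = 1/2 + (1/4)√((1−q)(1+q/√(1+q²))). -/
noncomputable def oneSidedValue (q : ℝ) : ℝ :=
  1 / 2 + Real.sqrt ((1 - q) * (1 + q / Real.sqrt (1 + q ^ 2))) / 4

/-!
Writing `g q = q / √(1 + q²) = sin (arctan q)`, the map `g` is `1`-Lipschitz as a composition of
two `1`-Lipschitz maps. For `0 ≤ x < y ≤ 1` this gives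
`(1 - y)(1 + g y) - (1 - x)(1 + g x) = (1 - y)(g y - g x) - (y - x)(1 + g x) ≤ -(y - x)(y + g x) < 0`,
so the radicand of `A` is strictly decreasing on `[0, 1]`, hence so is `A`.
-/

open Real Set

theorem Real.lipschitzWith_arctan : LipschitzWith 1 arctan :=
  lipschitzWith_of_nnnorm_deriv_le differentiable_arctan fun x => by
    rw [← NNReal.coe_le_coe, coe_nnnorm, deriv_arctan, NNReal.coe_one, norm_div, norm_one,
      Real.norm_of_nonneg (by positivity)]
    exact div_le_one_of_le₀ (by nlinarith) (by positivity)

theorem lipschitzWith_div_sqrt_one_add_sq : LipschitzWith 1 fun x : ℝ => x / √(1 + x ^ 2) := by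
  simpa only [Function.comp_def, sin_arctan, mul_one] using
    lipschitzWith_sin.comp Real.lipschitzWith_arctan

theorem oneSidedValue_radicand_strictAntiOn :
    StrictAntiOn (fun q : ℝ => (1 - q) * (1 + q / √(1 + q ^ 2))) (Icc 0 1) := by
  rintro x ⟨hx0, -⟩ y ⟨-, hy1⟩ hxy
  have hg : y / √(1 + y ^ 2) - x / √(1 + x ^ 2) ≤ y - x := by
    simpa [Real.dist_eq, abs_of_pos (sub_pos.2 hxy)] using
      (le_abs_self _).trans (lipschitzWith_div_sqrt_one_add_sq.dist_le_mul y x)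
  have hgx : 0 ≤ x / √(1 + x ^ 2) := by positivity
  linarith [mul_le_mul_of_nonneg_left hg (sub_nonneg.2 hy1),
    mul_pos (sub_pos.2 hxy) (add_pos_of_pos_of_nonneg (hx0.trans_lt hxy) hgx)]

theorem oneSidedValue_strictAntiOn : StrictAntiOn oneSidedValue (Icc 0 1) := by
  intro x hx y hy hxy
  have hfy : 0 ≤ (1 - y) * (1 + y / √(1 + y ^ 2)) :=
    mul_nonneg (sub_nonneg.2 hy.2) (by linarith [div_nonneg hy.1 (sqrt_nonneg (1 + y ^ 2))])
  have := sqrt_lt_sqrt hfy (oneSidedValue_radicand_strictAntiOn hx hy hxy)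
  unfold oneSidedValue
  linarith

/-- A(q) is strictly decreasing on [0,1], with A(0) = 3/4 and A(1) = 1/2. -/
theorem oneSidedValue_strictAnti :
    StrictAntiOn oneSidedValue (Set.Icc (0 : ℝ) 1) ∧
      oneSidedValue 0 = 3 / 4 ∧ oneSidedValue 1 = 1 / 2 := by
  refine ⟨oneSidedValue_strictAntiOn, ?_, ?_⟩ <;> norm_num [oneSidedValue]
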